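/- arXiv:1504.02585 — 2 statements merged into one kernel-verified Lean document; each statement's English description precedes it below -/
import Mathlib

section
/- Let X be a metric measure space with a doubling measure and nonempty spheres, 0 < γ ≤ 1/2, 0 < s < ∞, u measurable and a.e. finite, and (g_k)_{k∈ℤ} a fractional s-gradient of u. Then there is C > 0 depending only on s and the doubling constant such that inf_{c∈ℝ} m_{|u−c|}^γ(B(x,2^{−i})) ≤ C 2^{−is} ∑_{k=i−3}^{i} m_{g_k}^{γ/C}(B(x,2^{−i+2})) for all x ∈ X and i ∈ ℤ. -/
open MeasureTheory Metric

/-- The γ-median of `u` over `A`. -/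
noncomputable def median {X : Type*} [MeasurableSpace X] (μ : Measure X) (γ : ℝ) (A : Set X)
    (u : X → ℝ) : ℝ :=
  sInf {a : ℝ | μ {x ∈ A | a < u x} < ENNReal.ofReal γ * μ A}

section aux
open Set
variable {X : Type*} [MeasurableSpace X] {μ : Measure X} {γ : ℝ} {A : Set X} {v : X → ℝ}

lemma median_set_nonneg (hγ : γ ≤ 1) (hv : ∀ x, 0 ≤ v x) :
    ∀ a ∈ {a : ℝ | μ {x ∈ A | a < v x} < ENNReal.ofReal γ * μ A}, 0 ≤ a := by
  intro a ha
  by_contra hlt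
  push_neg at hlt
  simp only [mem_setOf_eq] at ha
  have hA : {x | x ∈ A ∧ a < v x} = A := by
    ext y; simp only [mem_setOf_eq, and_iff_left_iff_imp]
    exact fun _ => lt_of_lt_of_le hlt (hv y)
  rw [show {x ∈ A | a < v x} = A from hA] at ha
  have : ENNReal.ofReal γ * μ A ≤ 1 * μ A :=
    mul_le_mul_left (by simpa using ENNReal.ofReal_le_one.mpr hγ) _
  rw [one_mul] at this
  exact absurd (lt_of_lt_of_le ha this) (lt_irrefl _)

lemma median_nonneg (hγ : γ ≤ 1) (hv : ∀ x, 0 ≤ v x) : 0 ≤ median μ γ A v :=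
  Real.sInf_nonneg (median_set_nonneg hγ hv)

lemma median_le (hγ : γ ≤ 1) (hv : ∀ x, 0 ≤ v x) {a : ℝ}
    (h : μ {x ∈ A | a < v x} < ENNReal.ofReal γ * μ A) : median μ γ A v ≤ a :=
  csInf_le ⟨0, fun _ hb => median_set_nonneg hγ hv _ hb⟩ h

lemma median_set_nonempty (hfin : μ A ≠ ⊤) (hb : 0 < ENNReal.ofReal γ * μ A)
    (hA : MeasurableSet A) (hv : Measurable v) :
    {a : ℝ | μ {x ∈ A | a < v x} < ENNReal.ofReal γ * μ A}.Nonempty := by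
  have htend : Filter.Tendsto (fun n : ℕ => μ {x ∈ A | (n : ℝ) < v x}) Filter.atTop
      (nhds (μ (⋂ n : ℕ, {x ∈ A | (n : ℝ) < v x}))) := by
    apply tendsto_measure_iInter_atTop
    · intro n
      exact ((hA.inter (hv measurableSet_Ioi)).nullMeasurableSet)
    · intro m n hmn y hy
      obtain ⟨h1, h2⟩ := hy
      exact ⟨h1, lt_of_le_of_lt (by exact_mod_cast Nat.cast_le.mpr hmn) h2⟩
    · exact ⟨0, ne_top_of_le_ne_top hfin (measure_mono (sep_subset _ _))⟩
  have hempty : (⋂ n : ℕ, {x ∈ A | (n : ℝ) < v x}) = ∅ := by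
    ext y
    simp only [mem_iInter, mem_sep_iff, mem_empty_iff_false, iff_false, not_forall]
    obtain ⟨n, hn⟩ := exists_nat_gt (v y)
    exact ⟨n, fun h => absurd h.2 (not_lt.mpr hn.le)⟩
  rw [hempty, measure_empty] at htend
  obtain ⟨n, hn⟩ := (htend.eventually_lt_const hb).exists
  exact ⟨n, hn⟩

lemma measure_median_lt
    (hne : {a : ℝ | μ {x ∈ A | a < v x} < ENNReal.ofReal γ * μ A}.Nonempty) :
    μ {x ∈ A | median μ γ A v < v x} ≤ ENNReal.ofReal γ * μ A := by
  set m := median μ γ A v with hm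
  have hkey : ∀ b : ℝ, m < b → μ {x ∈ A | b < v x} ≤ ENNReal.ofReal γ * μ A := by
    intro b hb
    obtain ⟨a, ha, hab⟩ := exists_lt_of_csInf_lt hne hb
    refine le_trans (measure_mono ?_) ha.le
    intro y hy
    exact ⟨hy.1, lt_trans hab hy.2⟩
  have hunion : {x ∈ A | m < v x} = ⋃ n : ℕ, {x ∈ A | m + 1/(n+1) < v x} := by
    ext y
    simp only [mem_sep_iff, mem_iUnion]
    constructor
    · rintro ⟨h1, h2⟩
      obtain ⟨n, hn⟩ := exists_nat_one_div_lt (sub_pos.mpr h2)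
      exact ⟨n, h1, by linarith⟩
    · rintro ⟨n, h1, h2⟩
      have : (0:ℝ) < 1/(n+1) := by positivity
      exact ⟨h1, by linarith⟩
  rw [hunion]
  rw [Directed.measure_iUnion]
  · refine iSup_le fun n => hkey _ ?_
    have : (0:ℝ) < 1/((n:ℝ)+1) := by positivity
    linarith
  · intro a b
    rcases le_total a b with h | h
    · refine ⟨b, fun y hy => ⟨hy.1, lt_of_le_of_lt ?_ hy.2⟩, subset_rfl⟩
      have : (1:ℝ)/(b+1) ≤ 1/(a+1) := by
        apply one_div_le_one_div_of_le <;> [positivity; exact_mod_cast by linarith]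
      linarith
    · refine ⟨a, subset_rfl, fun y hy => ⟨hy.1, lt_of_le_of_lt ?_ hy.2⟩⟩
      have : (1:ℝ)/(a+1) ≤ 1/(b+1) := by
        apply one_div_le_one_div_of_le <;> [positivity; exact_mod_cast by linarith]
      linarith

end aux

lemma doub_iter {X : Type*} [MetricSpace X] [MeasurableSpace X] (μ : Measure X) {cD : ℝ}
    (hd : ∀ (x : X) (r : ℝ), 0 < r → μ (ball x (2 * r)) ≤ ENNReal.ofReal cD * μ (ball x r)) :
    ∀ (n : ℕ) (y : X) (ρ : ℝ), 0 < ρ →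
      μ (ball y (2 ^ n * ρ)) ≤ ENNReal.ofReal cD ^ n * μ (ball y ρ) := by
  intro n
  induction n with
  | zero => intro y ρ _; simp
  | succ n ih =>
      intro y ρ hρ
      have h1 : (2:ℝ) ^ (n+1) * ρ = 2 * (2 ^ n * ρ) := by ring
      calc μ (ball y (2 ^ (n+1) * ρ)) = μ (ball y (2 * (2 ^ n * ρ))) := by rw [h1]
        _ ≤ ENNReal.ofReal cD * μ (ball y (2 ^ n * ρ)) := hd y _ (by positivity)
        _ ≤ ENNReal.ofReal cD * (ENNReal.ofReal cD ^ n * μ (ball y ρ)) :=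
            mul_le_mul_right (ih y ρ hρ) _
        _ = ENNReal.ofReal cD ^ (n+1) * μ (ball y ρ) := by ring

theorem median_poincare_fractional {X : Type*} [MetricSpace X] [MeasurableSpace X] [BorelSpace X]
    (μ : Measure X)
    (hpos : ∀ (x : X) (r : ℝ), 0 < r → 0 < μ (ball x r))
    (hfin : ∀ (x : X) (r : ℝ), 0 < r → μ (ball x r) < ⊤)
    (cD : ℝ) (hcD : 0 < cD)
    (hdoubling : ∀ (x : X) (r : ℝ), 0 < r →
      μ (ball x (2 * r)) ≤ ENNReal.ofReal cD * μ (ball x r))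
    (hspheres : ∀ (x : X) (r : ℝ), 0 < r → ∃ y : X, dist x y = r)
    (s : ℝ) (hs : 0 < s) :
    ∃ C : ℝ, 0 < C ∧
      ∀ (γ : ℝ), 0 < γ → γ ≤ 1 / 2 →
      ∀ (u : X → ℝ), Measurable u →
      ∀ (g : ℤ → X → ℝ), (∀ k x, 0 ≤ g k x) → (∀ k, Measurable (g k)) →
      ∀ (E : Set X), μ E = 0 →
      (∀ (k : ℤ), ∀ x ∉ E, ∀ y ∉ E,
          (2 : ℝ) ^ (-k - 1) ≤ dist x y → dist x y < (2 : ℝ) ^ (-k) →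
          |u x - u y| ≤ dist x y ^ s * (g k x + g k y)) →
      ∀ (x : X) (i : ℤ),
        sInf {t : ℝ | ∃ c : ℝ,
            t = median μ γ (ball x ((2 : ℝ) ^ (-i))) (fun y => |u y - c|)} ≤
          C * ((2 : ℝ) ^ (-i)) ^ s *
            ∑ k ∈ Finset.Icc (i - 3) i,
              median μ (γ / C) (ball x ((2 : ℝ) ^ (-i + 2))) (g k) := by
  have h4s : (0:ℝ) < (4:ℝ) ^ s := Real.rpow_pos_of_pos (by norm_num) s
  have hcD2 : (0:ℝ) < cD ^ 2 := by positivity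
  have hcD5 : (0:ℝ) < cD ^ 5 := by positivity
  set C : ℝ := 2 * (4:ℝ) ^ s + 4 * cD ^ 2 + 2 * cD ^ 5 + 1 with hCdef
  have hC : 0 < C := by rw [hCdef]; positivity
  have hC1 : 1 ≤ C := by nlinarith
  refine ⟨C, hC, ?_⟩
  intro γ hγ0 hγ2 u hu g hg0 hgm E hE hfrac x i
  set r : ℝ := (2:ℝ) ^ (-i) with hrdef
  have hr : 0 < r := by rw [hrdef]; positivity
  have he3 : (2:ℝ) ^ (-i+2) = 4 * r := by
    rw [hrdef, zpow_add₀ (by norm_num : (2:ℝ) ≠ 0)]; ring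
  rw [he3]
  set B : Set X := ball x r with hBdef
  set B' : Set X := ball x (4*r) with hB'def
  have hμB0 : μ B ≠ 0 := (hpos x r hr).ne'
  have hμBt : μ B ≠ ⊤ := (hfin x r hr).ne
  have hμB'0 : μ B' ≠ 0 := (hpos x (4*r) (by positivity)).ne'
  have hμB't : μ B' ≠ ⊤ := (hfin x (4*r) (by positivity)).ne
  set m : ℤ → ℝ := fun k => median μ (γ / C) B' (g k) with hmdef
  have hγC0 : 0 < γ / C := div_pos hγ0 hC
  have hγC1 : γ / C ≤ 1 := le_trans (div_le_self hγ0.le hC1) (by linarith)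
  have hm0 : ∀ k, 0 ≤ m k := fun k => median_nonneg hγC1 (fun y => hg0 k y)
  have hbadk : ∀ k, μ {y ∈ B' | m k < g k y} ≤ ENNReal.ofReal (γ/C) * μ B' := by
    intro k
    apply measure_median_lt
    exact median_set_nonempty hμB't
      (ENNReal.mul_pos (ENNReal.ofReal_pos.mpr hγC0).ne' hμB'0)
      measurableSet_ball (hgm k)
  -- comparison of balls via doubling
  have hB'B : μ B' ≤ ENNReal.ofReal cD ^ 2 * μ B := by
    have h4 : (4:ℝ)*r = 2^(2:ℕ) * r := by norm_num
    rw [hB'def, hBdef, h4]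
    exact doub_iter μ hdoubling 2 x r hr
  obtain ⟨z, hz⟩ := hspheres x (2*r) (by positivity)
  set Bz : Set X := ball z (r/4) with hBzdef
  have hμBz0 : μ Bz ≠ 0 := (hpos z (r/4) (by positivity)).ne'
  have hμBzt : μ Bz ≠ ⊤ := (hfin z (r/4) (by positivity)).ne
  have hB'z : μ B' ≤ ENNReal.ofReal cD ^ 5 * μ Bz := by
    have hsub : B' ⊆ ball z (2^(5:ℕ) * (r/4)) := by
      intro y hy
      rw [hB'def, mem_ball] at hy
      rw [mem_ball]
      have h1 : dist y z ≤ dist y x + dist x z := dist_triangle y x z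
      have := hz
      rw [dist_comm x z] at this
      nlinarith [this, h1, hy]
    exact le_trans (measure_mono hsub) (doub_iter μ hdoubling 5 z (r/4) (by positivity))
  -- the exceptional set
  set Bad : Set X := E ∪ ⋃ k ∈ Finset.Icc (i-3) i, {y ∈ B' | m k < g k y} with hBadDef
  have hμBad : μ Bad ≤ 4 * (ENNReal.ofReal (γ/C) * μ B') := by
    calc μ Bad ≤ μ E + μ (⋃ k ∈ Finset.Icc (i-3) i, {y ∈ B' | m k < g k y}) :=
          measure_union_le _ _
      _ = μ (⋃ k ∈ Finset.Icc (i-3) i, {y ∈ B' | m k < g k y}) := by rw [hE, zero_add]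
      _ ≤ ∑ k ∈ Finset.Icc (i-3) i, μ {y ∈ B' | m k < g k y} :=
          measure_biUnion_finset_le _ _
      _ ≤ ∑ _k ∈ Finset.Icc (i-3) i, ENNReal.ofReal (γ/C) * μ B' :=
          Finset.sum_le_sum (fun k _ => hbadk k)
      _ = 4 * (ENNReal.ofReal (γ/C) * μ B') := by
          rw [Finset.sum_const, Int.card_Icc, show (i+1-(i-3)).toNat = 4 by omega]
          simp [nsmul_eq_mul]
  -- existence of a good point z'
  have hlt1 : μ Bad < μ Bz := by
    have e : (4:ENNReal) * ENNReal.ofReal (γ/C) * ENNReal.ofReal cD ^ 5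
        = ENNReal.ofReal (4*(γ/C)*cD^5) := by
      rw [ENNReal.ofReal_mul (by positivity), ENNReal.ofReal_mul (by norm_num),
        ENNReal.ofReal_pow hcD.le, ENNReal.ofReal_ofNat]
    have ht1 : 4*(γ/C)*cD^5 < 1 := by
      have h1 : 4*(γ/C)*cD^5 = (4*γ*cD^5)/C := by ring
      rw [h1, div_lt_one hC]
      nlinarith [mul_nonneg (by linarith : (0:ℝ) ≤ 1/2 - γ) hcD5.le]
    calc μ Bad ≤ 4 * (ENNReal.ofReal (γ/C) * μ B') := hμBad
      _ ≤ 4 * (ENNReal.ofReal (γ/C) * (ENNReal.ofReal cD ^ 5 * μ Bz)) := by gcongr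
      _ = (4 * ENNReal.ofReal (γ/C) * ENNReal.ofReal cD ^ 5) * μ Bz := by ring
      _ = ENNReal.ofReal (4*(γ/C)*cD^5) * μ Bz := by rw [e]
      _ < 1 * μ Bz :=
          (ENNReal.mul_lt_mul_iff_left hμBz0 hμBzt).mpr (ENNReal.ofReal_lt_one.mpr ht1)
      _ = μ Bz := one_mul _
  have hz'ex : ∃ z' ∈ Bz, z' ∉ Bad := by
    by_contra h
    push_neg at h
    exact absurd (measure_mono h) (not_le_of_gt hlt1)
  obtain ⟨z', hz'Bz, hz'Bad⟩ := hz'ex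
  have hz'E : z' ∉ E := fun h => hz'Bad (Or.inl h)
  have hdz'z : dist z' z < r/4 := by rw [hBzdef, mem_ball] at hz'Bz; exact hz'Bz
  have hz'B' : z' ∈ B' := by
    rw [hB'def, mem_ball]
    have h1 : dist z' x ≤ dist z' z + dist z x := dist_triangle z' z x
    have h2 : dist z x = 2*r := by rw [dist_comm]; exact hz
    linarith
  have hz'g : ∀ k ∈ Finset.Icc (i-3) i, g k z' ≤ m k := by
    intro k hk
    by_contra hgt
    push_neg at hgt
    exact hz'Bad (Or.inr (Set.mem_biUnion hk ⟨hz'B', hgt⟩))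
  -- pointwise bound on the good set
  have hSum0 : 0 ≤ ∑ j ∈ Finset.Icc (i-3) i, m j := Finset.sum_nonneg fun j _ => hm0 j
  have hrs : 0 ≤ r ^ s := (Real.rpow_pos_of_pos hr s).le
  have hkey : ∀ y ∈ B, y ∉ Bad →
      |u y - u z'| ≤ C * r ^ s * ∑ j ∈ Finset.Icc (i-3) i, m j := by
    intro y hyB hyBad
    have hyE : y ∉ E := fun h => hyBad (Or.inl h)
    rw [hBdef, mem_ball] at hyB
    have hyB' : y ∈ B' := by rw [hB'def, mem_ball]; linarith
    have hyg : ∀ k ∈ Finset.Icc (i-3) i, g k y ≤ m k := by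
      intro k hk
      by_contra hgt
      push_neg at hgt
      exact hyBad (Or.inr (Set.mem_biUnion hk ⟨hyB', hgt⟩))
    have hd1 : dist x z ≤ dist x y + dist y z' + dist z' z := dist_triangle4 x y z' z
    have hdxy : dist x y < r := by rw [dist_comm]; exact hyB
    have hlow : 3*r/4 < dist y z' := by rw [hz] at hd1; linarith
    have hd2 : dist y z' ≤ dist y x + dist x z + dist z z' := dist_triangle4 y x z z'
    have hup : dist y z' < 13*r/4 := by
      rw [hz, dist_comm z z'] at hd2
      have : dist y x = dist x y := dist_comm y x
      linarith
    obtain ⟨k, hk, h2l, h2u⟩ : ∃ k ∈ Finset.Icc (i-3) i,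
        (2:ℝ)^(-k-1) ≤ dist y z' ∧ dist y z' < (2:ℝ)^(-k) := by
      have ei1 : (2:ℝ)^(-i-1) = r/2 := by
        rw [zpow_sub₀ (by norm_num : (2:ℝ) ≠ 0), ← hrdef]; norm_num
      have ei2 : (2:ℝ)^(-i+1) = 2*r := by
        rw [zpow_add₀ (by norm_num : (2:ℝ) ≠ 0), ← hrdef]; ring
      have ei3 : (2:ℝ)^(-i+2) = 4*r := he3
      rcases lt_or_ge (dist y z') r with h | h
      · refine ⟨i, by rw [Finset.mem_Icc]; omega, ?_, ?_⟩
        · rw [ei1]; linarith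
        · rw [← hrdef]; exact h
      · rcases lt_or_ge (dist y z') (2*r) with h' | h'
        · refine ⟨i-1, by rw [Finset.mem_Icc]; omega, ?_, ?_⟩
          · rw [show -(i-1)-1 = -i by ring, ← hrdef]; exact h
          · rw [show -(i-1) = -i+1 by ring, ei2]; exact h'
        · refine ⟨i-2, by rw [Finset.mem_Icc]; omega, ?_, ?_⟩
          · rw [show -(i-2)-1 = -i+1 by ring, ei2]; exact h'
          · rw [show -(i-2) = -i+2 by ring, ei3]; linarith
    have hfk := hfrac k y hyE z' hz'E h2l h2u
    have hdp : dist y z' ^ s ≤ (4:ℝ)^s * r^s := by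
      rw [← Real.mul_rpow (by norm_num) hr.le]
      exact Real.rpow_le_rpow dist_nonneg (by linarith) hs.le
    have hsum : m k ≤ ∑ j ∈ Finset.Icc (i-3) i, m j :=
      Finset.single_le_sum (fun j _ => hm0 j) hk
    have hgy : g k y ≤ m k := hyg k hk
    have hgz : g k z' ≤ m k := hz'g k hk
    have hgyz0 : 0 ≤ g k y + g k z' := add_nonneg (hg0 k y) (hg0 k z')
    calc |u y - u z'| ≤ dist y z' ^ s * (g k y + g k z') := hfk
      _ ≤ ((4:ℝ)^s * r^s) * (m k + m k) := by
          apply mul_le_mul hdp (by linarith) hgyz0 (by positivity)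
      _ = 2*(4:ℝ)^s * (r^s * m k) := by ring
      _ ≤ 2*(4:ℝ)^s * (r^s * ∑ j ∈ Finset.Icc (i-3) i, m j) := by
          apply mul_le_mul_of_nonneg_left (mul_le_mul_of_nonneg_left hsum hrs)
          positivity
      _ ≤ C * r ^ s * ∑ j ∈ Finset.Icc (i-3) i, m j := by
          have h2C : 2*(4:ℝ)^s ≤ C := by nlinarith
          have := mul_le_mul_of_nonneg_right h2C (mul_nonneg hrs hSum0)
          calc 2*(4:ℝ)^s * (r^s * ∑ j ∈ Finset.Icc (i-3) i, m j)
              = 2*(4:ℝ)^s * (r^s * ∑ j ∈ Finset.Icc (i-3) i, m j) := rfl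
            _ ≤ C * (r^s * ∑ j ∈ Finset.Icc (i-3) i, m j) := this
            _ = C * r ^ s * ∑ j ∈ Finset.Icc (i-3) i, m j := by ring
  -- the median bound
  have hmed : median μ γ B (fun y => |u y - u z'|)
      ≤ C * r ^ s * ∑ j ∈ Finset.Icc (i-3) i, m j := by
    apply median_le (by linarith : γ ≤ 1) (fun y => abs_nonneg _)
    have hsubBad :
        {y ∈ B | C * r ^ s * ∑ j ∈ Finset.Icc (i-3) i, m j < |u y - u z'|} ⊆ Bad := by
      intro y hy
      by_contra hyBad
      exact absurd hy.2 (not_lt.mpr (hkey y hy.1 hyBad))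
    have e2 : (4:ENNReal) * ENNReal.ofReal (γ/C) * ENNReal.ofReal cD ^ 2
        = ENNReal.ofReal (4*(γ/C)*cD^2) := by
      rw [ENNReal.ofReal_mul (by positivity), ENNReal.ofReal_mul (by norm_num),
        ENNReal.ofReal_pow hcD.le, ENNReal.ofReal_ofNat]
    have ht2 : 4*(γ/C)*cD^2 < γ := by
      have h1 : (4*cD^2)/C < 1 := (div_lt_one hC).mpr (by nlinarith)
      have h2 := mul_lt_mul_of_pos_left h1 hγ0
      have h3 : 4*(γ/C)*cD^2 = γ * ((4*cD^2)/C) := by ring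
      rw [h3]; linarith
    calc μ {y ∈ B | C * r ^ s * ∑ j ∈ Finset.Icc (i-3) i, m j < |u y - u z'|}
        ≤ μ Bad := measure_mono hsubBad
      _ ≤ 4 * (ENNReal.ofReal (γ/C) * μ B') := hμBad
      _ ≤ 4 * (ENNReal.ofReal (γ/C) * (ENNReal.ofReal cD ^ 2 * μ B)) := by gcongr
      _ = (4 * ENNReal.ofReal (γ/C) * ENNReal.ofReal cD ^ 2) * μ B := by ring
      _ = ENNReal.ofReal (4*(γ/C)*cD^2) * μ B := by rw [e2]
      _ < ENNReal.ofReal γ * μ B := by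
          refine (ENNReal.mul_lt_mul_iff_left hμB0 hμBt).mpr ?_
          exact (ENNReal.ofReal_lt_ofReal_iff hγ0).mpr ht2
  -- conclusion
  have hbdd : BddBelow {t : ℝ | ∃ c : ℝ, t = median μ γ B (fun y => |u y - c|)} := by
    refine ⟨0, ?_⟩
    rintro t ⟨c, rfl⟩
    exact median_nonneg (by linarith) (fun y => abs_nonneg _)
  simp only [hmdef] at hmed
  exact le_trans (csInf_le hbdd ⟨u z', rfl⟩) hmed
end

section
/- Let X be a metric measure space with a doubling measure, positive finite on balls, and let 0 < s < ∞, 0 < p, q ≤ ∞. The Hajłasz–Besov space N^s_{p,q}(X) is complete with respect to its (quasi)norm; i.e., every Cauchy sequence in N^s_{p,q}(X) converges in N^s_{p,q}(X). -/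
open MeasureTheory Metric

/-- `g` is a fractional `s`-gradient of `u`. -/
def IsFracGrad {X : Type*} [MetricSpace X] [MeasurableSpace X] (μ : Measure X)
    (s : ℝ) (u : X → ℝ) (g : ℤ → X → ℝ) : Prop :=
  (∀ k x, 0 ≤ g k x) ∧ (∀ k, Measurable (g k)) ∧
    ∃ E : Set X, μ E = 0 ∧ ∀ k : ℤ, ∀ x ∉ E, ∀ y ∉ E,
      (2 : ℝ) ^ (-k - 1) ≤ dist x y → dist x y < (2 : ℝ) ^ (-k) →
      |u x - u y| ≤ dist x y ^ s * (g k x + g k y)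

/-- The mixed `ℓ^q(L^p)` norm of a sequence of functions. -/
noncomputable def lqLpNorm {X : Type*} [MeasurableSpace X] (μ : Measure X)
    (p q : ENNReal) (g : ℤ → X → ℝ) : ENNReal :=
  if q = ⊤ then ⨆ k : ℤ, eLpNorm (g k) p μ
  else (∑' k : ℤ, (eLpNorm (g k) p μ) ^ q.toReal) ^ (1 / q.toReal)

/-- The Hajłasz--Besov (quasi)norm. -/
noncomputable def besovNorm {X : Type*} [MetricSpace X] [MeasurableSpace X] (μ : Measure X)
    (s : ℝ) (p q : ENNReal) (u : X → ℝ) : ENNReal :=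
  eLpNorm u p μ + ⨅ (g : ℤ → X → ℝ) (_ : IsFracGrad μ s u g), lqLpNorm μ p q g

/-!
Let `ρ = min (1, p, q)`. Raised to the power `ρ`, both the `L^p` quasinorm and the mixed
`ℓ^q(L^p)` quasinorm become countably subadditive: this is Minkowski's inequality in `L^{p/ρ}`
and `ℓ^{q/ρ}` applied to `ρ`-th powers, combined with `(∑ aᵢ)^ρ ≤ ∑ aᵢ^ρ`. If a series `∑ eᵢ`
converges a.e. to `W` and `gᵢ` is a fractional gradient of `eᵢ`, then `∑ gᵢ` is a fractional
gradient of `W`, so `‖W‖^ρ ≤ 2 ∑ ‖eᵢ‖^ρ` for the Besov quasinorm. A Cauchy sequence has a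
subsequence with `‖u_{φ i} − u_{φ (i+1)}‖ < 2⁻ⁱ`; the telescoping series converges a.e. to a
limit `v`, and the same estimate applied to its tails shows `u_m → v` in `N^s_{p,q}`.
-/

open scoped ENNReal
open Filter

theorem ENNReal.iSup_rpow {ι : Sort*} (f : ι → ℝ≥0∞) {ρ : ℝ} (hρ : 0 < ρ) :
    (⨆ i, f i) ^ ρ = ⨆ i, f i ^ ρ :=
  (ENNReal.orderIsoRpow ρ hρ).map_iSup f

theorem ENNReal.rpow_tsum_le_tsum_rpow {ι : Type*} (f : ι → ℝ≥0∞) {ρ : ℝ} (hρ0 : 0 < ρ)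
    (hρ1 : ρ ≤ 1) : (∑' i, f i) ^ ρ ≤ ∑' i, f i ^ ρ := by
  rw [ENNReal.tsum_eq_iSup_sum, ENNReal.iSup_rpow _ hρ0]
  refine iSup_le fun s => ?_
  refine (Finset.le_sum_of_subadditive (· ^ ρ) (by simp [hρ0])
    (fun a b => ENNReal.rpow_add_le_add_rpow a b hρ0.le hρ1) s f).trans ?_
  exact ENNReal.sum_le_tsum s

theorem ENNReal.one_le_div_ofReal {t : ℝ≥0∞} {ρ : ℝ} (hρ : 0 < ρ) (hρt : ENNReal.ofReal ρ ≤ t) :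
    1 ≤ t / ENNReal.ofReal ρ :=
  (ENNReal.le_div_iff_mul_le (.inl (by simpa using hρ)) (.inl ENNReal.ofReal_ne_top)).2
    (by simpa using hρt)

theorem ENNReal.exists_pos_le_one_ofReal_le {p q : ℝ≥0∞} (hp : 0 < p) (hq : 0 < q) :
    ∃ ρ : ℝ, 0 < ρ ∧ ρ ≤ 1 ∧ ENNReal.ofReal ρ ≤ p ∧ ENNReal.ofReal ρ ≤ q := by
  set r := min (1 : ℝ≥0∞) (min p q)
  have hr : r ≠ ⊤ := ne_top_of_le_ne_top ENNReal.one_ne_top (min_le_left _ _)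
  refine ⟨r.toReal, ENNReal.toReal_pos (lt_min one_pos (lt_min hp hq)).ne' hr,
    ENNReal.toReal_le_of_le_ofReal zero_le_one (by simp [r]), ?_, ?_⟩ <;>
  rw [ENNReal.ofReal_toReal hr]
  · exact (min_le_right _ _).trans (min_le_left _ _)
  · exact (min_le_right _ _).trans (min_le_right _ _)

theorem ENNReal.tsum_inv_two_pow_rpow_ne_top {ρ : ℝ} (hρ : 0 < ρ) :
    ∑' i : ℕ, ((2 : ℝ≥0∞)⁻¹ ^ i) ^ ρ ≠ ⊤ := by
  simp_rw [← ENNReal.rpow_natCast_mul, mul_comm, ENNReal.rpow_mul_natCast, ENNReal.tsum_geometric]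
  exact ENNReal.inv_ne_top.2 (tsub_pos_of_lt (ENNReal.rpow_lt_one (by norm_num) hρ)).ne'

theorem exists_monotone_forall_ge_lt_inv_two_pow {F : ℕ → ℕ → ℝ≥0∞}
    (hF : ∀ ε : ℝ≥0∞, 0 < ε → ∃ N : ℕ, ∀ m ≥ N, ∀ n ≥ N, F m n < ε) :
    ∃ φ : ℕ → ℕ, Monotone φ ∧ ∀ i, ∀ m ≥ φ i, ∀ n ≥ φ i, F m n < 2⁻¹ ^ i := by
  obtain ⟨φ, hφ, hφF⟩ := extraction_forall_of_eventually' fun i =>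
    (hF (2⁻¹ ^ i) (ENNReal.pow_pos (by norm_num) i)).imp
      fun N hN k hk m hm n hn => hN m (hk.trans hm) n (hk.trans hn)
  exact ⟨φ, hφ.monotone, hφF⟩

section eLpNorm

variable {Y : Type*} [MeasurableSpace Y] {ν : Measure Y}

theorem eLpNorm_rpow_eq_eLpNorm_rpow_div (f : Y → ℝ≥0∞) (t : ℝ≥0∞) {ρ : ℝ} (hρ : 0 < ρ) :
    eLpNorm f t ν ^ ρ = eLpNorm (fun y => f y ^ ρ) (t / ENNReal.ofReal ρ) ν := by
  have h := eLpNorm_enorm_rpow (μ := ν) (p := t / ENNReal.ofReal ρ) f hρ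
  simp only [enorm_eq_self] at h
  rw [h, ENNReal.div_mul_cancel (by simpa using hρ) ENNReal.ofReal_ne_top]

theorem eLpNorm_iSup_of_directed {ι : Type*} [Countable ι] {F : ι → Y → ℝ≥0∞}
    (hF : ∀ i, AEMeasurable (F i) ν) (hdir : Directed (· ≤ ·) F) (t : ℝ≥0∞) :
    eLpNorm (fun y => ⨆ i, F i y) t ν = ⨆ i, eLpNorm (F i) t ν := by
  refine le_antisymm ?_ (iSup_le fun i => eLpNorm_mono_enorm fun y => le_iSup (F · y) i)
  rcases eq_or_ne t 0 with rfl | ht0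
  · simp
  rcases eq_or_ne t ⊤ with rfl | htop
  · simp only [eLpNorm_exponent_top]
    refine eLpNormEssSup_le_of_ae_enorm_bound ?_
    filter_upwards [ae_all_iff.2 fun i => ae_le_eLpNormEssSup (μ := ν) (f := F i)] with y hy
    exact iSup_le fun i => (hy i).trans (le_iSup (fun i => eLpNormEssSup (F i) ν) i)
  have ht : 0 < t.toReal := ENNReal.toReal_pos ht0 htop
  simp only [eLpNorm_eq_lintegral_rpow_enorm_toReal ht0 htop, enorm_eq_self,
    ENNReal.iSup_rpow _ ht]
  rw [lintegral_iSup_directed (fun i => (hF i).pow_const _) (hdir.mono_comp (· ≤ ·)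
    (g := fun (f : Y → ℝ≥0∞) y => f y ^ t.toReal) fun _ _ h y => ENNReal.rpow_le_rpow (h y) ht.le),
    ENNReal.iSup_rpow _ (one_div_pos.2 ht)]

theorem eLpNorm_tsum_le {ι : Type*} [Countable ι] {f : ι → Y → ℝ≥0∞}
    (hf : ∀ i, AEMeasurable (f i) ν) {t : ℝ≥0∞} (ht : 1 ≤ t) :
    eLpNorm (fun y => ∑' i, f i y) t ν ≤ ∑' i, eLpNorm (f i) t ν := by
  have hsum : ∀ s : Finset ι, eLpNorm (fun y => ∑ i ∈ s, f i y) t ν ≤ ∑ i ∈ s, eLpNorm (f i) t ν :=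
    fun s => by
      simpa only [Finset.sum_fn] using
        eLpNorm_sum_le (s := s) (fun i _ => (hf i).aestronglyMeasurable) ht
  simp only [ENNReal.tsum_eq_iSup_sum]
  rw [eLpNorm_iSup_of_directed (fun s => Finset.aemeasurable_fun_sum s fun i _ => hf i)
    (Monotone.directed_le fun s s' h y => Finset.sum_le_sum_of_subset h)]
  exact iSup_mono hsum

theorem eLpNorm_tsum_rpow_le {ι : Type*} [Countable ι] {f : ι → Y → ℝ≥0∞}
    (hf : ∀ i, AEMeasurable (f i) ν) {t : ℝ≥0∞} {ρ : ℝ} (hρ0 : 0 < ρ) (hρ1 : ρ ≤ 1)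
    (hρt : ENNReal.ofReal ρ ≤ t) :
    eLpNorm (fun y => ∑' i, f i y) t ν ^ ρ ≤ ∑' i, eLpNorm (f i) t ν ^ ρ := by
  have ht := ENNReal.one_le_div_ofReal hρ0 hρt
  simp only [eLpNorm_rpow_eq_eLpNorm_rpow_div _ _ hρ0]
  calc eLpNorm (fun y => (∑' i, f i y) ^ ρ) (t / ENNReal.ofReal ρ) ν
      ≤ eLpNorm (fun y => ∑' i, f i y ^ ρ) (t / ENNReal.ofReal ρ) ν :=
        eLpNorm_mono_enorm fun y => by
          simpa only [enorm_eq_self] using ENNReal.rpow_tsum_le_tsum_rpow _ hρ0 hρ1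
    _ ≤ _ := eLpNorm_tsum_le (fun i => (hf i).pow_const ρ) ht

theorem eLpNorm_eLpNorm_tsum_rpow_le {K : Type*} [MeasurableSpace K] [DiscreteMeasurableSpace K]
    {κ : Measure K} {ι : Type*} [Countable ι] {Γ : ι → K → Y → ℝ≥0∞}
    (hΓ : ∀ i k, AEMeasurable (Γ i k) ν) {p q : ℝ≥0∞} {ρ : ℝ} (hρ0 : 0 < ρ) (hρ1 : ρ ≤ 1)
    (hρp : ENNReal.ofReal ρ ≤ p) (hρq : ENNReal.ofReal ρ ≤ q) :
    eLpNorm (fun k => eLpNorm (fun y => ∑' i, Γ i k y) p ν) q κ ^ ρ ≤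
      ∑' i, eLpNorm (fun k => eLpNorm (Γ i k) p ν) q κ ^ ρ := by
  simp only [eLpNorm_rpow_eq_eLpNorm_rpow_div _ q hρ0]
  calc eLpNorm (fun k => eLpNorm (fun y => ∑' i, Γ i k y) p ν ^ ρ) (q / ENNReal.ofReal ρ) κ
      ≤ eLpNorm (fun k => ∑' i, eLpNorm (Γ i k) p ν ^ ρ) (q / ENNReal.ofReal ρ) κ :=
        eLpNorm_mono_enorm fun k => by
          simpa only [enorm_eq_self] using eLpNorm_tsum_rpow_le (hΓ · k) hρ0 hρ1 hρp
    _ ≤ _ := eLpNorm_tsum_le (fun i => Measurable.of_discrete.aemeasurable)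
        (ENNReal.one_le_div_ofReal hρ0 hρq)

theorem le_eLpNorm_count {K : Type*} [MeasurableSpace K] [MeasurableSingletonClass K]
    (f : K → ℝ≥0∞) {q : ℝ≥0∞} (hq : q ≠ 0) (k : K) : f k ≤ eLpNorm f q Measure.count := by
  rcases eq_or_ne q ⊤ with rfl | htop
  · simpa [eLpNorm_exponent_top] using le_iSup f k
  have hq' : 0 < q.toReal := ENNReal.toReal_pos hq htop
  rw [eLpNorm_eq_lintegral_rpow_enorm_toReal hq htop, lintegral_count]
  calc f k = (f k ^ q.toReal) ^ (1 / q.toReal) := by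
        rw [← ENNReal.rpow_mul, mul_one_div_cancel hq'.ne', ENNReal.rpow_one]
    _ ≤ _ := ENNReal.rpow_le_rpow (by simpa using ENNReal.le_tsum k) (by positivity)

theorem ae_lt_top_of_eLpNorm_ne_top {F : Y → ℝ≥0∞} (hF : AEMeasurable F ν) {t : ℝ≥0∞}
    (ht : t ≠ 0) (h : eLpNorm F t ν ≠ ⊤) : ∀ᵐ y ∂ν, F y < ⊤ := by
  rcases eq_or_ne t ⊤ with rfl | htop
  · filter_upwards [ae_le_eLpNormEssSup (μ := ν) (f := F)] with y hy
    exact hy.trans_lt (by simpa [eLpNorm_exponent_top] using h.lt_top)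
  have ht' : 0 < t.toReal := ENNReal.toReal_pos ht htop
  rw [eLpNorm_eq_lintegral_rpow_enorm_toReal ht htop] at h
  simp only [enorm_eq_self] at h
  have hint : ∫⁻ y, F y ^ t.toReal ∂ν ≠ ⊤ := fun h' =>
    h (by rw [h', ENNReal.top_rpow_of_pos (by positivity)])
  filter_upwards [ae_lt_top' (hF.pow_const _) hint] with y hy
  exact (ENNReal.rpow_lt_top_iff_of_pos ht').1 hy

theorem ae_summable_of_tsum_eLpNorm_rpow_ne_top {ι : Type*} [Countable ι] {f : ι → Y → ℝ}
    (hf : ∀ i, AEMeasurable (f i) ν) {t : ℝ≥0∞} {ρ : ℝ} (hρ0 : 0 < ρ) (hρ1 : ρ ≤ 1)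
    (hρt : ENNReal.ofReal ρ ≤ t) (h : ∑' i, eLpNorm (f i) t ν ^ ρ ≠ ⊤) :
    ∀ᵐ y ∂ν, Summable fun i => f i y := by
  have hF : eLpNorm (fun y => ∑' i, ‖f i y‖ₑ) t ν ≠ ⊤ := by
    have := eLpNorm_tsum_rpow_le (fun i => (hf i).enorm) hρ0 hρ1 hρt
    simp only [eLpNorm_enorm] at this
    exact ((ENNReal.rpow_lt_top_iff_of_pos hρ0).1 (this.trans_lt h.lt_top)).ne
  have ht : t ≠ 0 := (lt_of_lt_of_le (by simpa using hρ0) hρt).ne'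
  filter_upwards [ae_lt_top_of_eLpNorm_ne_top (AEMeasurable.tsum fun i => (hf i).enorm) ht hF]
    with y hy using Summable.of_enorm hy.ne

end eLpNorm

section lqLp

variable {X : Type*} [MeasurableSpace X] {μ : Measure X} {p q : ℝ≥0∞}

theorem lqLpNorm_eq_eLpNorm_count (hq : q ≠ 0) (g : ℤ → X → ℝ) :
    lqLpNorm μ p q g = eLpNorm (fun k => eLpNorm (g k) p μ) q Measure.count := by
  unfold lqLpNorm
  split_ifs with htop
  · simp [htop, eLpNorm_exponent_top]
  · simp [eLpNorm_eq_lintegral_rpow_enorm_toReal hq htop, lintegral_count]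

theorem eLpNorm_le_lqLpNorm (hq : q ≠ 0) (g : ℤ → X → ℝ) (k : ℤ) :
    eLpNorm (g k) p μ ≤ lqLpNorm μ p q g := by
  rw [lqLpNorm_eq_eLpNorm_count hq]
  exact le_eLpNorm_count (fun k => eLpNorm (g k) p μ) hq k

theorem lqLpNorm_tsum_rpow_le {ι : Type*} [Countable ι] {g : ι → ℤ → X → ℝ}
    (hg : ∀ i k, AEMeasurable (g i k) μ) {ρ : ℝ} (hρ0 : 0 < ρ) (hρ1 : ρ ≤ 1)
    (hρp : ENNReal.ofReal ρ ≤ p) (hρq : ENNReal.ofReal ρ ≤ q) :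
    lqLpNorm μ p q (fun k x => ∑' i, g i k x) ^ ρ ≤ ∑' i, lqLpNorm μ p q (g i) ^ ρ := by
  have hq : q ≠ 0 := (lt_of_lt_of_le (by simpa using hρ0) hρq).ne'
  simp only [lqLpNorm_eq_eLpNorm_count hq]
  calc eLpNorm (fun k => eLpNorm (fun x => ∑' i, g i k x) p μ) q Measure.count ^ ρ
      ≤ eLpNorm (fun k => eLpNorm (fun x => ∑' i, ‖g i k x‖ₑ) p μ) q Measure.count ^ ρ := by
        refine ENNReal.rpow_le_rpow (eLpNorm_mono_enorm fun k => ?_) hρ0.le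
        simpa only [enorm_eq_self] using
          eLpNorm_mono_enorm fun x => (enorm_tsum_le_tsum_enorm).trans_eq (enorm_eq_self _).symm
    _ ≤ ∑' i, eLpNorm (fun k => eLpNorm (fun x => ‖g i k x‖ₑ) p μ) q Measure.count ^ ρ :=
        eLpNorm_eLpNorm_tsum_rpow_le (fun i k => (hg i k).enorm) hρ0 hρ1 hρp hρq
    _ = _ := by simp only [eLpNorm_enorm]

end lqLp

section Besov

variable {X : Type*} [MetricSpace X] [MeasurableSpace X] {μ : Measure X} {s : ℝ} {p q : ℝ≥0∞}
  {ρ : ℝ}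

theorem isFracGrad_of_hasSum {ι : Type*} [Countable ι] {e : ι → X → ℝ} {g : ι → ℤ → X → ℝ}
    {W : X → ℝ} (hg : ∀ i, IsFracGrad μ s (e i) (g i))
    (hW : ∀ᵐ x ∂μ, HasSum (fun i => e i x) (W x))
    (hgs : ∀ k, ∀ᵐ x ∂μ, Summable fun i => g i k x) :
    IsFracGrad μ s W (fun k x => ∑' i, g i k x) := by
  choose hg0 hgm E hE hgrad using hg
  refine ⟨fun k x => tsum_nonneg fun i => hg0 i k x, fun k => Measurable.tsum fun i => hgm i k,
    (⋃ i, E i) ∪ {x | ¬HasSum (fun i => e i x) (W x)} ∪ ⋃ k, {x | ¬Summable fun i => g i k x},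
    measure_union_null (measure_union_null (measure_iUnion_null hE) (ae_iff.1 hW))
      (measure_iUnion_null fun k => ae_iff.1 (hgs k)), ?_⟩
  intro k x hx y hy hd1 hd2
  simp only [Set.mem_union, Set.mem_iUnion, Set.mem_ofPred_eq, not_or, not_exists, not_not]
    at hx hy
  obtain ⟨⟨hxE, hxW⟩, hxg⟩ := hx
  obtain ⟨⟨hyE, hyW⟩, hyg⟩ := hy
  rw [← Real.norm_eq_abs]
  exact (hxW.sub hyW).norm_le_of_bounded
    (((hxg k).hasSum.add (hyg k).hasSum).mul_left (dist x y ^ s))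
    fun i => hgrad i k x (hxE i) y (hyE i) hd1 hd2

theorem besovNorm_le_of_isFracGrad {u : X → ℝ} {g : ℤ → X → ℝ} (hg : IsFracGrad μ s u g) :
    besovNorm μ s p q u ≤ eLpNorm u p μ + lqLpNorm μ p q g :=
  add_le_add le_rfl (iInf₂_le g hg)

theorem exists_isFracGrad_of_besovNorm_lt {u : X → ℝ} {c : ℝ≥0∞}
    (h : besovNorm μ s p q u < c) :
    eLpNorm u p μ < c ∧ ∃ g, IsFracGrad μ s u g ∧ lqLpNorm μ p q g < c := by
  refine ⟨le_self_add.trans_lt h, ?_⟩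
  simpa only [iInf_lt_iff, exists_prop] using le_add_self.trans_lt h


theorem besovNorm_rpow_le_of_tendsto_sum (hρ0 : 0 < ρ) (hρ1 : ρ ≤ 1) (hρp : ENNReal.ofReal ρ ≤ p)
    (hρq : ENNReal.ofReal ρ ≤ q) {e : ℕ → X → ℝ} (he : ∀ i, Measurable (e i)) {c : ℕ → ℝ≥0∞}
    (hc : ∀ i, besovNorm μ s p q (e i) < c i) {W : X → ℝ}
    (hW : ∀ᵐ x ∂μ, Tendsto (fun n => ∑ i ∈ Finset.range n, e i x) atTop (nhds (W x))) :
    besovNorm μ s p q W ^ ρ ≤ 2 * ∑' i, c i ^ ρ := by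
  rcases eq_or_ne (∑' i, c i ^ ρ) ⊤ with hS | hS
  · simp [hS]
  choose hLp g hg hlq using fun i => exists_isFracGrad_of_besovNorm_lt (hc i)
  have hq : q ≠ 0 := (lt_of_lt_of_le (by simpa using hρ0) hρq).ne'
  have hLp_sum : ∑' i, eLpNorm (e i) p μ ^ ρ ≤ ∑' i, c i ^ ρ :=
    ENNReal.tsum_le_tsum fun i => ENNReal.rpow_le_rpow (hLp i).le hρ0.le
  have hlq_sum : ∑' i, lqLpNorm μ p q (g i) ^ ρ ≤ ∑' i, c i ^ ρ :=
    ENNReal.tsum_le_tsum fun i => ENNReal.rpow_le_rpow (hlq i).le hρ0.le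
  have hsum : ∀ᵐ x ∂μ, HasSum (fun i => e i x) (W x) := by
    filter_upwards [ae_summable_of_tsum_eLpNorm_rpow_ne_top (fun i => (he i).aemeasurable)
      hρ0 hρ1 hρp (ne_top_of_le_ne_top hS hLp_sum), hW] with x hx hxW
    exact hx.hasSum_iff_tendsto_nat.2 hxW
  have hgs : ∀ k, ∀ᵐ x ∂μ, Summable fun i => g i k x := fun k =>
    ae_summable_of_tsum_eLpNorm_rpow_ne_top (fun i => ((hg i).2.1 k).aemeasurable) hρ0 hρ1 hρp
      (ne_top_of_le_ne_top hS (le_trans (ENNReal.tsum_le_tsum fun i =>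
        ENNReal.rpow_le_rpow (eLpNorm_le_lqLpNorm hq (g i) k) hρ0.le) hlq_sum))
  have hLpW : eLpNorm W p μ ^ ρ ≤ ∑' i, c i ^ ρ := by
    calc eLpNorm W p μ ^ ρ ≤ eLpNorm (fun x => ∑' i, ‖e i x‖ₑ) p μ ^ ρ := by
          refine ENNReal.rpow_le_rpow (eLpNorm_mono_enorm_ae ?_) hρ0.le
          filter_upwards [hsum] with x hx
          rw [← hx.tsum_eq, enorm_eq_self]
          exact enorm_tsum_le_tsum_enorm
      _ ≤ ∑' i, eLpNorm (e i) p μ ^ ρ := by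
          simpa only [eLpNorm_enorm] using
            eLpNorm_tsum_rpow_le (fun i => (he i).enorm.aemeasurable) hρ0 hρ1 hρp
      _ ≤ _ := hLp_sum
  calc besovNorm μ s p q W ^ ρ
      ≤ (eLpNorm W p μ + lqLpNorm μ p q (fun k x => ∑' i, g i k x)) ^ ρ :=
        ENNReal.rpow_le_rpow (besovNorm_le_of_isFracGrad (isFracGrad_of_hasSum hg hsum hgs))
          hρ0.le
    _ ≤ eLpNorm W p μ ^ ρ + lqLpNorm μ p q (fun k x => ∑' i, g i k x) ^ ρ :=
        ENNReal.rpow_add_le_add_rpow _ _ hρ0.le hρ1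
    _ ≤ ∑' i, c i ^ ρ + ∑' i, c i ^ ρ :=
        add_le_add hLpW ((lqLpNorm_tsum_rpow_le (fun i k => ((hg i).2.1 k).aemeasurable)
          hρ0 hρ1 hρp hρq).trans hlq_sum)
    _ = 2 * ∑' i, c i ^ ρ := (two_mul _).symm

theorem besovNorm_sub_rpow_le_of_tendsto (hρ0 : 0 < ρ) (hρ1 : ρ ≤ 1)
    (hρp : ENNReal.ofReal ρ ≤ p) (hρq : ENNReal.ofReal ρ ≤ q) {w : ℕ → X → ℝ}
    (hw : ∀ n, Measurable (w n)) {W : X → ℝ}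
    (hW : ∀ᵐ x ∂μ, Tendsto (fun n => w n x) atTop (nhds (W x))) {c : ℕ → ℝ≥0∞}
    (hc : ∀ i, besovNorm μ s p q (fun x => w i x - w (i + 1) x) < c i) :
    besovNorm μ s p q (fun x => w 0 x - W x) ^ ρ ≤ 2 * ∑' i, c i ^ ρ :=
  besovNorm_rpow_le_of_tendsto_sum hρ0 hρ1 hρp hρq (e := fun i x => w i x - w (i + 1) x)
    (fun i => (hw i).sub (hw (i + 1))) hc (hW.mono fun x hx =>
      (hx.const_sub (w 0 x)).congr fun n => (Finset.sum_range_sub' (fun i => w i x) n).symm)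

theorem exists_measurable_ae_tendsto_of_besovNorm_sub_lt (hρ0 : 0 < ρ) (hρ1 : ρ ≤ 1)
    (hρp : ENNReal.ofReal ρ ≤ p) {u : ℕ → X → ℝ} (hu : ∀ n, Measurable (u n))
    (hcau : ∀ i, besovNorm μ s p q (fun x => u i x - u (i + 1) x) < 2⁻¹ ^ i) :
    ∃ v : X → ℝ, Measurable v ∧ ∀ᵐ x ∂μ, Tendsto (fun n => u n x) atTop (nhds (v x)) := by
  have hsum : ∀ᵐ x ∂μ, Summable fun i => u i x - u (i + 1) x :=
    ae_summable_of_tsum_eLpNorm_rpow_ne_top (fun i => ((hu i).sub (hu (i + 1))).aemeasurable)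
      hρ0 hρ1 hρp (ne_top_of_le_ne_top (ENNReal.tsum_inv_two_pow_rpow_ne_top hρ0)
        (ENNReal.tsum_le_tsum fun i => ENNReal.rpow_le_rpow
          (exists_isFracGrad_of_besovNorm_lt (hcau i)).1.le hρ0.le))
  refine ⟨fun x => u 0 x - ∑' i, (u i x - u (i + 1) x),
    (hu 0).sub (Measurable.tsum fun i => (hu i).sub (hu (i + 1))), ?_⟩
  filter_upwards [hsum] with x hx
  refine (hx.hasSum.tendsto_sum_nat.const_sub (u 0 x)).congr fun n => ?_
  rw [Finset.sum_range_sub' (fun i => u i x), sub_sub_cancel]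

theorem besovNorm_sub_rpow_le_of_tendsto_subseq (hρ0 : 0 < ρ) (hρ1 : ρ ≤ 1)
    (hρp : ENNReal.ofReal ρ ≤ p) (hρq : ENNReal.ofReal ρ ≤ q) {u : ℕ → X → ℝ}
    (hu : ∀ n, Measurable (u n)) {φ : ℕ → ℕ} (hφ : Monotone φ)
    (hφu : ∀ i, ∀ m ≥ φ i, ∀ n ≥ φ i, besovNorm μ s p q (fun x => u m x - u n x) < 2⁻¹ ^ i)
    {v : X → ℝ} (hv : ∀ᵐ x ∂μ, Tendsto (fun n => u (φ n) x) atTop (nhds (v x)))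
    (M : ℕ) {m : ℕ} (hm : φ M ≤ m) :
    besovNorm μ s p q (fun x => u m x - v x) ^ ρ ≤ 2 * ∑' i, ((2 : ℝ≥0∞)⁻¹ ^ (i + M)) ^ ρ := by
  set ψ : ℕ → ℕ := fun i => if i = 0 then m else φ (i + M)
  have hψ : ∀ i, φ (i + M) ≤ ψ i := by
    rintro (_ | i) <;> simp [ψ, hm]
  have hψ_succ : ∀ i, ψ (i + 1) = φ (i + 1 + M) := fun i => by simp [ψ]
  have hlim : ∀ᵐ x ∂μ, Tendsto (fun n => u (ψ n) x) atTop (nhds (v x)) := by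
    filter_upwards [hv] with x hx
    refine (hx.comp (tendsto_add_atTop_nat M)).congr' ?_
    filter_upwards [eventually_ge_atTop 1] with n hn
    simp [ψ, Nat.one_le_iff_ne_zero.1 hn]
  simpa [ψ] using besovNorm_sub_rpow_le_of_tendsto hρ0 hρ1 hρp hρq (fun i => hu (ψ i)) hlim
    fun i => hφu (i + M) _ (hψ i) _ (by rw [hψ_succ]; exact hφ (by omega))

theorem besovNorm_lt_top_of_ae_tendsto (hρ0 : 0 < ρ) (hρ1 : ρ ≤ 1)
    (hρp : ENNReal.ofReal ρ ≤ p) (hρq : ENNReal.ofReal ρ ≤ q) {u : ℕ → X → ℝ}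
    (hu : ∀ n, Measurable (u n)) (h0 : besovNorm μ s p q (u 0) < ⊤)
    (hcau : ∀ i, besovNorm μ s p q (fun x => u (i + 1) x - u i x) < 2⁻¹ ^ i)
    {v : X → ℝ} (hv : ∀ᵐ x ∂μ, Tendsto (fun n => u n x) atTop (nhds (v x))) :
    besovNorm μ s p q v < ⊤ := by
  -- `v = 0 - (-v)` with `-v` the limit of `0, -u 0, -u 1, …`; this puts `u 0` into the series
  let w : ℕ → X → ℝ := fun
    | 0 => 0
    | n + 1 => fun x => -u n x
  let c : ℕ → ℝ≥0∞ := fun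
    | 0 => besovNorm μ s p q (u 0) + 1
    | n + 1 => 2⁻¹ ^ n
  have hw : ∀ n, Measurable (w n) := by
    rintro (_ | n)
    exacts [measurable_const, (hu n).neg]
  have hlim : ∀ᵐ x ∂μ, Tendsto (fun n => w n x) atTop (nhds (-v x)) :=
    hv.mono fun x hx => (tendsto_add_atTop_iff_nat 1).1 hx.neg
  have hc : ∀ i, besovNorm μ s p q (fun x => w i x - w (i + 1) x) < c i := by
    rintro (_ | i)
    · simpa [w, c] using ENNReal.lt_add_right h0.ne one_ne_zero
    · show besovNorm μ s p q (fun x => -u i x - -u (i + 1) x) < 2⁻¹ ^ i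
      simpa only [neg_sub_neg] using hcau i
  have hS : ∑' i, c i ^ ρ ≠ ⊤ := by
    rw [tsum_eq_zero_add' ENNReal.summable]
    exact ENNReal.add_ne_top.2 ⟨ENNReal.rpow_ne_top_of_nonneg hρ0.le
      (ENNReal.add_ne_top.2 ⟨h0.ne, ENNReal.one_ne_top⟩), ENNReal.tsum_inv_two_pow_rpow_ne_top hρ0⟩
  have hv' := besovNorm_sub_rpow_le_of_tendsto hρ0 hρ1 hρp hρq hw hlim hc
  simp only [w, Pi.zero_apply, zero_sub, neg_neg] at hv'
  exact (ENNReal.rpow_lt_top_iff_of_pos hρ0).1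
    (hv'.trans_lt (ENNReal.mul_lt_top ENNReal.ofNat_lt_top hS.lt_top))

end Besov

theorem besov_complete_general {X : Type*} [MetricSpace X] [MeasurableSpace X]
    (μ : Measure X)
    (s : ℝ) (p q : ENNReal) (hp : 0 < p) (hq : 0 < q)
    (u : ℕ → X → ℝ) (humeas : ∀ n, Measurable (u n))
    (hufin : ∀ n, besovNorm μ s p q (u n) < ⊤)
    (hcauchy : ∀ ε : ENNReal, 0 < ε → ∃ N : ℕ, ∀ m ≥ N, ∀ n ≥ N,
      besovNorm μ s p q (fun x => u m x - u n x) < ε) :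
    ∃ v : X → ℝ, Measurable v ∧ besovNorm μ s p q v < ⊤ ∧
      Filter.Tendsto (fun n => besovNorm μ s p q (fun x => u n x - v x))
        Filter.atTop (nhds 0) := by
  obtain ⟨ρ, hρ0, hρ1, hρp, hρq⟩ := ENNReal.exists_pos_le_one_ofReal_le hp hq
  obtain ⟨φ, hφ, hφu⟩ := exists_monotone_forall_ge_lt_inv_two_pow hcauchy
  obtain ⟨v, hv, hlim⟩ := exists_measurable_ae_tendsto_of_besovNorm_sub_lt hρ0 hρ1 hρp
    (fun n => humeas (φ n)) fun i => hφu i _ le_rfl _ (hφ i.le_succ)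
  refine ⟨v, hv, besovNorm_lt_top_of_ae_tendsto hρ0 hρ1 hρp hρq (fun n => humeas (φ n))
    (hufin _) (fun i => hφu i _ (hφ i.le_succ) _ le_rfl) hlim, ?_⟩
  have hT : Tendsto (fun M => 2 * ∑' i, ((2 : ℝ≥0∞)⁻¹ ^ (i + M)) ^ ρ) atTop (nhds 0) := by
    simpa using ENNReal.Tendsto.const_mul
      (ENNReal.tendsto_sum_nat_add _ (ENNReal.tsum_inv_two_pow_rpow_ne_top hρ0))
      (.inr ENNReal.ofNat_ne_top)
  rw [ENNReal.tendsto_nhds_zero]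
  intro ε hε
  obtain ⟨M, hM⟩ :=
    (ENNReal.tendsto_nhds_zero.1 hT (ε ^ ρ) (ENNReal.rpow_pos_of_nonneg hε hρ0.le)).exists
  filter_upwards [eventually_ge_atTop (φ M)] with m hm
  exact (ENNReal.rpow_le_rpow_iff hρ0).1
    ((besovNorm_sub_rpow_le_of_tendsto_subseq hρ0 hρ1 hρp hρq humeas hφ hφu hlim M hm).trans hM)

theorem besov_complete {X : Type*} [MetricSpace X] [MeasurableSpace X] [BorelSpace X]
    (μ : Measure X)
    (hpos : ∀ (x : X) (r : ℝ), 0 < r → 0 < μ (ball x r))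
    (hfin : ∀ (x : X) (r : ℝ), 0 < r → μ (ball x r) < ⊤)
    (cD : ℝ) (hcD : 0 < cD)
    (hdoubling : ∀ (x : X) (r : ℝ), 0 < r →
      μ (ball x (2 * r)) ≤ ENNReal.ofReal cD * μ (ball x r))
    (s : ℝ) (hs : 0 < s) (p q : ENNReal) (hp : 0 < p) (hq : 0 < q)
    (u : ℕ → X → ℝ) (humeas : ∀ n, Measurable (u n))
    (hufin : ∀ n, besovNorm μ s p q (u n) < ⊤)
    (hcauchy : ∀ ε : ENNReal, 0 < ε → ∃ N : ℕ, ∀ m ≥ N, ∀ n ≥ N,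
      besovNorm μ s p q (fun x => u m x - u n x) < ε) :
    ∃ v : X → ℝ, Measurable v ∧ besovNorm μ s p q v < ⊤ ∧
      Filter.Tendsto (fun n => besovNorm μ s p q (fun x => u n x - v x))
        Filter.atTop (nhds 0) :=
  besov_complete_general μ s p q hp hq u humeas hufin hcauchy
end
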